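/- Let A ∈ Cl(Q) be invertible. Then for every vector x ∈ M, P_A(ι x) = ((1/2)·(ι x · A - α(A) · ι x)) · A⁻¹; that is, the inverse projection of a vector x onto A equals the left contraction (x ⌟ A)·A⁻¹, where the left contraction of a vector into a multivector is given by x ⌟ A = (1/2)(ι x · A - α(A) · ι x). -/
import Mathlib

open CliffordAlgebra

/-- The inverse projection operator `P_A(X) = (1/2)·(X - α(A)·X·A⁻¹)` for invertible `A`. -/
noncomputable def invProj {R M : Type*} [CommRing R] [Invertible (2 : R)]
    [AddCommGroup M] [Module R M] {Q : QuadraticForm R M}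
    (A : CliffordAlgebra Q) [Invertible A] (X : CliffordAlgebra Q) : CliffordAlgebra Q :=
  ⅟(2 : R) • (X - involute A * X * ⅟A)

/-- The inverse projection of a vector `x` onto an invertible `A` is the familiar
projection `(x ⌟ A)·A⁻¹`, where `x ⌟ A = (1/2)(ι x · A - α(A) · ι x)` is the left
contraction. -/
theorem invProj_ι {R M : Type*} [CommRing R] [Invertible (2 : R)]
    [AddCommGroup M] [Module R M] {Q : QuadraticForm R M}
    (A : CliffordAlgebra Q) [Invertible A] (x : M) :
    invProj A (ι Q x) = (⅟(2 : R) • (ι Q x * A - involute A * ι Q x)) * ⅟A := by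
  rw [invProj, smul_mul_assoc, sub_mul, mul_invOf_cancel_right]
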